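/- Let v1, v2 and T be jointly distributed random variables taking values in finite nonempty sets and let z1 = f(v1) for a deterministic (measurable) function f be a minimal sufficient representation, i.e. I(z1;v2) = I(v1;v2) and I(z1;v1|v2) = 0. Then the Bayes error rate Pe := 1 − E_{z1}[max_t P(T = t | z1)] satisfies Pe ≤ 1 − exp(−(H(T) − (I(v1;v2) − I(v1;v2|T)))). -/
import Mathlib


open scoped BigOperators

/-- Probability that the random variable `X` (on a finite sample space `Ω`
with probability mass function `p`) takes the value `x`. -/
noncomputable def pr {Ω S : Type*} [Fintype Ω] [DecidableEq S]
    (p : Ω → ℝ) (X : Ω → S) (x : S) : ℝ :=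
  ∑ ω, if X ω = x then p ω else 0

/-- Shannon entropy (natural logarithm) of a random variable `X`. -/
noncomputable def entropy {Ω S : Type*} [Fintype Ω] [Fintype S] [DecidableEq S]
    (p : Ω → ℝ) (X : Ω → S) : ℝ :=
  -∑ x, pr p X x * Real.log (pr p X x)

/-- Conditional Shannon entropy `H(X | Y)`. -/
noncomputable def condEntropy {Ω S U : Type*} [Fintype Ω] [Fintype S] [DecidableEq S]
    [Fintype U] [DecidableEq U] (p : Ω → ℝ) (X : Ω → S) (Y : Ω → U) : ℝ :=
  entropy p (fun ω => (X ω, Y ω)) - entropy p Y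

/-- Mutual information `I(X; Y)`. -/
noncomputable def mi {Ω S U : Type*} [Fintype Ω] [Fintype S] [DecidableEq S]
    [Fintype U] [DecidableEq U] (p : Ω → ℝ) (X : Ω → S) (Y : Ω → U) : ℝ :=
  entropy p X + entropy p Y - entropy p (fun ω => (X ω, Y ω))

/-- Conditional mutual information `I(X; Y | Z)`. -/
noncomputable def cmi {Ω S U W : Type*} [Fintype Ω] [Fintype S] [DecidableEq S]
    [Fintype U] [DecidableEq U] [Fintype W] [DecidableEq W]
    (p : Ω → ℝ) (X : Ω → S) (Y : Ω → U) (Z : Ω → W) : ℝ :=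
  mi p X (fun ω => (Y ω, Z ω)) - mi p X Z

/-- Conditional probability `P(X = x | Y = y)` (with junk value `0` when
`P(Y = y) = 0`, via real division). -/
noncomputable def condProb {Ω S U : Type*} [Fintype Ω] [DecidableEq S] [DecidableEq U]
    (p : Ω → ℝ) (X : Ω → S) (Y : Ω → U) (x : S) (y : U) : ℝ :=
  pr p (fun ω => (X ω, Y ω)) (x, y) / pr p Y y

/-- Bayes error rate `Pe = 1 − E_{p(z)}[max_t P(T = t | z)]`, the lowest
achievable error of any classifier predicting `T` from `Z`. -/
noncomputable def bayesError {Ω A B : Type*} [Fintype Ω]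
    [Fintype A] [DecidableEq A] [Nonempty A] [Fintype B] [DecidableEq B]
    (p : Ω → ℝ) (T : Ω → A) (Z : Ω → B) : ℝ :=
  1 - ∑ z, pr p Z z * ⨆ t, condProb p T Z t z

section aux
variable {Ω : Type*} [Fintype Ω] {p : Ω → ℝ}

lemma pr_nonneg {S : Type*} [DecidableEq S] (hp : ∀ ω, 0 ≤ p ω)
    (X : Ω → S) (x : S) : 0 ≤ pr p X x :=
  Finset.sum_nonneg fun ω _ => by by_cases h : X ω = x <;> simp [h, hp ω]

lemma sum_pr {S : Type*} [Fintype S] [DecidableEq S] (hp1 : ∑ ω, p ω = 1)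
    (X : Ω → S) : ∑ x, pr p X x = 1 := by
  rw [← hp1]
  unfold pr
  rw [Finset.sum_comm]
  exact Finset.sum_congr rfl fun ω _ => by simp [Finset.sum_ite_eq]

lemma pr_comp {S U : Type*} [Fintype S] [DecidableEq S] [DecidableEq U]
    (X : Ω → S) (g : S → U) (u : U) :
    pr p (fun ω => g (X ω)) u = ∑ x ∈ Finset.univ.filter (fun x => g x = u), pr p X x := by
  unfold pr
  rw [Finset.sum_comm]
  refine Finset.sum_congr rfl fun ω _ => ?_
  rw [Finset.sum_ite_eq]
  simp [Finset.mem_filter]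

lemma pr_le_pr_comp {S U : Type*} [Fintype S] [DecidableEq S] [DecidableEq U]
    (hp : ∀ ω, 0 ≤ p ω) (X : Ω → S) (g : S → U) (x : S) :
    pr p X x ≤ pr p (fun ω => g (X ω)) (g x) := by
  rw [pr_comp X g]
  exact Finset.single_le_sum (fun x' _ => pr_nonneg hp X x')
    (Finset.mem_filter.mpr ⟨Finset.mem_univ x, rfl⟩)

lemma pr_comp_inj {S U : Type*} [Fintype S] [DecidableEq S] [DecidableEq U]
    (X : Ω → S) {e : S → U} (he : Function.Injective e) (x : S) :
    pr p (fun ω => e (X ω)) (e x) = pr p X x := by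
  unfold pr
  simp [he.eq_iff]

lemma ent_comp {S U : Type*} [Fintype S] [DecidableEq S] [Fintype U] [DecidableEq U]
    (X : Ω → S) (g : S → U) :
    entropy p (fun ω => g (X ω))
      = -∑ x, pr p X x * Real.log (pr p (fun ω => g (X ω)) (g x)) := by
  unfold entropy
  congr 1
  rw [← Finset.sum_fiberwise Finset.univ g
    (fun x => pr p X x * Real.log (pr p (fun ω => g (X ω)) (g x)))]
  refine Finset.sum_congr rfl fun u _ => ?_
  have h1 : (∑ x ∈ Finset.univ.filter (fun x => g x = u),
        pr p X x * Real.log (pr p (fun ω => g (X ω)) (g x)))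
      = ∑ x ∈ Finset.univ.filter (fun x => g x = u),
        pr p X x * Real.log (pr p (fun ω => g (X ω)) u) :=
    Finset.sum_congr rfl fun x hx => by rw [(Finset.mem_filter.mp hx).2]
  rw [h1, ← Finset.sum_mul, ← pr_comp X g u]

lemma ent_ext {S : Type*} [Fintype S] [DecidableEq S] {X Y : Ω → S}
    (h : ∀ ω, X ω = Y ω) : entropy p X = entropy p Y := by
  rw [funext h]

lemma ent_comp_inj {S U : Type*} [Fintype S] [DecidableEq S] [Fintype U] [DecidableEq U]
    (X : Ω → S) {e : S → U} (he : Function.Injective e) :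
    entropy p (fun ω => e (X ω)) = entropy p X := by
  rw [ent_comp X e]
  unfold entropy
  congr 1
  exact Finset.sum_congr rfl fun x _ => by rw [pr_comp_inj X he]

lemma ent_relabel {S U : Type*} [Fintype S] [DecidableEq S] [Fintype U] [DecidableEq U]
    (X : Ω → S) (Y : Ω → U) {e : S → U} (he : Function.Injective e)
    (h : ∀ ω, Y ω = e (X ω)) : entropy p Y = entropy p X := by
  rw [ent_ext h, ent_comp_inj X he]

lemma pr_marg {S W : Type*} [Fintype S] [DecidableEq S] [DecidableEq W]
    (X : Ω → S) (Z : Ω → W) (z : W) :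
    ∑ x, pr p (fun ω => (X ω, Z ω)) (x, z) = pr p Z z := by
  unfold pr
  rw [Finset.sum_comm]
  refine Finset.sum_congr rfl fun ω _ => ?_
  by_cases hz : Z ω = z <;> simp [Prod.ext_iff, hz, Finset.sum_ite_eq]

end aux

section aux2
variable {Ω : Type*} [Fintype Ω] {p : Ω → ℝ}

lemma jensen_log {ι : Type*} (t : Finset ι) (w x : ι → ℝ)
    (hw : ∀ i ∈ t, 0 ≤ w i) (hw1 : ∑ i ∈ t, w i = 1) (hx : ∀ i ∈ t, 0 < x i) :
    ∑ i ∈ t, w i * Real.log (x i) ≤ Real.log (∑ i ∈ t, w i * x i) := by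
  have := (strictConcaveOn_log_Ioi.concaveOn).le_map_sum hw hw1
    (fun i hi => Set.mem_Ioi.mpr (hx i hi))
  simpa using this

lemma cmi_nonneg {S U W : Type*} [Fintype S] [DecidableEq S]
    [Fintype U] [DecidableEq U] [Fintype W] [DecidableEq W]
    (hp : ∀ ω, 0 ≤ p ω) (hp1 : ∑ ω, p ω = 1)
    (X : Ω → S) (Y : Ω → U) (Z : Ω → W) : 0 ≤ cmi p X Y Z := by
  classical
  set J : Ω → S × U × W := fun ω => (X ω, Y ω, Z ω) with hJ
  set q : S × U × W → ℝ := pr p J with hq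
  set q1 : U × W → ℝ := pr p (fun ω => (Y ω, Z ω)) with hq1
  set q2 : S × W → ℝ := pr p (fun ω => (X ω, Z ω)) with hq2
  set q3 : W → ℝ := pr p Z with hq3
  -- express the four entropies as sums over the triple
  have e1 : entropy p (fun ω => (Y ω, Z ω))
      = -∑ s, q s * Real.log (q1 s.2) := by
    have h := ent_comp (p := p) J (fun s => s.2)
    have h2 : entropy p (fun ω => (Y ω, Z ω)) = entropy p (fun ω => (J ω).2) := rfl
    have h3 : ∀ u, pr p (fun ω => (J ω).2) u = q1 u := fun u => rfl
    rw [h2, h]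
  have e2 : entropy p (fun ω => (X ω, Z ω))
      = -∑ s, q s * Real.log (q2 (s.1, s.2.2)) := by
    have h := ent_comp (p := p) J (fun s => (s.1, s.2.2))
    have h2 : entropy p (fun ω => (X ω, Z ω)) = entropy p (fun ω => ((J ω).1, (J ω).2.2)) := rfl
    have h3 : ∀ u, pr p (fun ω => ((J ω).1, (J ω).2.2)) u = q2 u := fun u => rfl
    rw [h2, h]
  have e3 : entropy p Z = -∑ s, q s * Real.log (q3 s.2.2) := by
    have h := ent_comp (p := p) J (fun s => s.2.2)
    have h2 : entropy p Z = entropy p (fun ω => (J ω).2.2) := rfl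
    have h3 : ∀ u, pr p (fun ω => (J ω).2.2) u = q3 u := fun u => rfl
    rw [h2, h]
  have e4 : entropy p (fun ω => (X ω, (Y ω, Z ω))) = -∑ s, q s * Real.log (q s) := rfl
  have hcmi : cmi p X Y Z
      = ∑ s, q s * (Real.log (q s) + Real.log (q3 s.2.2)
          - Real.log (q1 s.2) - Real.log (q2 (s.1, s.2.2))) := by
    have hsplit : ∑ s, q s * (Real.log (q s) + Real.log (q3 s.2.2)
          - Real.log (q1 s.2) - Real.log (q2 (s.1, s.2.2)))
        = ∑ s, q s * Real.log (q s) + ∑ s, q s * Real.log (q3 s.2.2)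
          - ∑ s, q s * Real.log (q1 s.2) - ∑ s, q s * Real.log (q2 (s.1, s.2.2)) := by
      rw [← Finset.sum_add_distrib, ← Finset.sum_sub_distrib, ← Finset.sum_sub_distrib]
      exact Finset.sum_congr rfl fun s _ => by ring
    simp only [cmi, mi]
    rw [e1, e2, e3, e4, hsplit]
    ring
  have hq0 : ∀ s, 0 ≤ q s := fun s => pr_nonneg hp J s
  have hq10 : ∀ u, 0 ≤ q1 u := fun u => pr_nonneg hp _ u
  have hq20 : ∀ u, 0 ≤ q2 u := fun u => pr_nonneg hp _ u
  have hq30 : ∀ z, 0 ≤ q3 z := fun z => pr_nonneg hp _ z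
  have hle1 : ∀ s : S × U × W, q s ≤ q1 s.2 :=
    fun s => pr_le_pr_comp hp J (fun s => s.2) s
  have hle2 : ∀ s : S × U × W, q s ≤ q2 (s.1, s.2.2) :=
    fun s => pr_le_pr_comp hp J (fun s => (s.1, s.2.2)) s
  have hle3 : ∀ s : S × U × W, q s ≤ q3 s.2.2 :=
    fun s => pr_le_pr_comp hp J (fun s => s.2.2) s
  set SS : Finset (S × U × W) := Finset.univ.filter (fun s => 0 < q s) with hSS
  have hpos : ∀ s ∈ SS, 0 < q s := fun s hs => (Finset.mem_filter.mp hs).2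
  have hSS_sum : ∑ s ∈ SS, q s = 1 := by
    rw [hSS, Finset.sum_filter_of_ne fun s _ h => lt_of_le_of_ne (hq0 s) (Ne.symm h)]
    exact sum_pr hp1 J
  set r : S × U × W → ℝ := fun s => q1 s.2 * q2 (s.1, s.2.2) / (q s * q3 s.2.2) with hr
  have hrpos : ∀ s ∈ SS, 0 < r s := by
    intro s hs
    have hqs := hpos s hs
    exact div_pos (mul_pos (lt_of_lt_of_le hqs (hle1 s)) (lt_of_lt_of_le hqs (hle2 s)))
      (mul_pos hqs (lt_of_lt_of_le hqs (hle3 s)))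
  have hcmi2 : cmi p X Y Z = -∑ s ∈ SS, q s * Real.log (r s) := by
    rw [hcmi, ← Finset.sum_filter_of_ne
      (fun s (_ : s ∈ Finset.univ) h => lt_of_le_of_ne (hq0 s) (Ne.symm (left_ne_zero_of_mul h))),
      ← hSS, ← Finset.sum_neg_distrib]
    refine Finset.sum_congr rfl fun s hs => ?_
    have hqs := hpos s hs
    have h1 := lt_of_lt_of_le hqs (hle1 s)
    have h2 := lt_of_lt_of_le hqs (hle2 s)
    have h3 := lt_of_lt_of_le hqs (hle3 s)
    rw [hr]
    rw [Real.log_div (mul_pos h1 h2).ne' (mul_pos hqs h3).ne',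
      Real.log_mul h1.ne' h2.ne', Real.log_mul hqs.ne' h3.ne']
    ring
  have hjensen : ∑ s ∈ SS, q s * Real.log (r s) ≤ Real.log (∑ s ∈ SS, q s * r s) :=
    jensen_log SS q r (fun s _ => hq0 s) hSS_sum hrpos
  have hB1 : ∑ s ∈ SS, q s * r s ≤ 1 := by
    have hqr : ∀ s ∈ SS, q s * r s = q1 s.2 * q2 (s.1, s.2.2) / q3 s.2.2 := by
      intro s hs
      have hqs := hpos s hs
      simp only [hr]
      rw [mul_div_assoc', mul_div_mul_left _ _ hqs.ne']
    rw [Finset.sum_congr rfl hqr]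
    set TT : Finset (S × U × W) := Finset.univ.filter (fun s => 0 < q3 s.2.2) with hTT
    have hsub : SS ⊆ TT := by
      intro s hs
      exact Finset.mem_filter.mpr ⟨Finset.mem_univ s, lt_of_lt_of_le (hpos s hs) (hle3 s)⟩
    have hstep : ∑ s ∈ SS, q1 s.2 * q2 (s.1, s.2.2) / q3 s.2.2
        ≤ ∑ s ∈ TT, q1 s.2 * q2 (s.1, s.2.2) / q3 s.2.2 :=
      Finset.sum_le_sum_of_subset_of_nonneg hsub fun s _ _ =>
        div_nonneg (mul_nonneg (hq10 _) (hq20 _)) (hq30 _)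
    refine hstep.trans ?_
    have hTTsum : ∑ s ∈ TT, q1 s.2 * q2 (s.1, s.2.2) / q3 s.2.2
        = ∑ z, if 0 < q3 z then q3 z else 0 := by
      rw [hTT, Finset.sum_filter]
      rw [Fintype.sum_prod_type]
      have inner : ∀ x : S, ∑ yz : U × W,
          (if 0 < q3 yz.2 then q1 yz * q2 (x, yz.2) / q3 yz.2 else 0)
          = ∑ y : U, ∑ z : W, (if 0 < q3 z then q1 (y, z) * q2 (x, z) / q3 z else 0) := by
        intro x
        rw [Fintype.sum_prod_type]
      rw [Finset.sum_congr rfl fun x _ => inner x]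
      have swap1 : ∀ x : S, (∑ y : U, ∑ z : W,
            (if 0 < q3 z then q1 (y, z) * q2 (x, z) / q3 z else 0))
          = ∑ z : W, ∑ y : U, (if 0 < q3 z then q1 (y, z) * q2 (x, z) / q3 z else 0) :=
        fun x => Finset.sum_comm
      rw [Finset.sum_congr rfl fun x _ => swap1 x, Finset.sum_comm]
      refine Finset.sum_congr rfl fun z _ => ?_
      by_cases h : 0 < q3 z
      · simp only [if_pos h]
        have m2 : ∑ x : S, q2 (x, z) = q3 z := by rw [hq2, hq3]; exact pr_marg X Z z
        have m1 : ∑ y : U, q1 (y, z) = q3 z := by rw [hq1, hq3]; exact pr_marg Y Z z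
        have hxrow : ∀ x : S, ∑ y : U, q1 (y, z) * q2 (x, z) / q3 z = q2 (x, z) := by
          intro x
          rw [← Finset.sum_div, ← Finset.sum_mul, m1, mul_comm, mul_div_assoc,
            div_self h.ne', mul_one]
        rw [Finset.sum_congr rfl fun x _ => hxrow x, m2]
      · simp [h]
    rw [hTTsum]
    calc ∑ z, (if 0 < q3 z then q3 z else 0) ≤ ∑ z, q3 z := by
          refine Finset.sum_le_sum fun z _ => ?_
          by_cases h : 0 < q3 z <;> simp [h, hq30 z]
      _ = 1 := sum_pr hp1 Z
  have hB0 : 0 ≤ ∑ s ∈ SS, q s * r s :=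
    Finset.sum_nonneg fun s hs => mul_nonneg (hq0 s) (hrpos s hs).le
  have hlog : Real.log (∑ s ∈ SS, q s * r s) ≤ 0 := Real.log_nonpos hB0 hB1
  rw [hcmi2]
  linarith [hjensen.trans hlog]
end aux2

section aux3
variable {Ω : Type*} [Fintype Ω] {p : Ω → ℝ}

lemma exp_neg_condEntropy_le {A B : Type*} [Fintype A] [DecidableEq A] [Nonempty A]
    [Fintype B] [DecidableEq B] (hp : ∀ ω, 0 ≤ p ω) (hp1 : ∑ ω, p ω = 1)
    (T : Ω → A) (Z : Ω → B) :
    Real.exp (-(condEntropy p T Z)) ≤ ∑ z, pr p Z z * ⨆ t, condProb p T Z t z := by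
  classical
  set J : Ω → A × B := fun ω => (T ω, Z ω) with hJ
  set pq : A × B → ℝ := pr p J with hpq
  set pZ : B → ℝ := pr p Z with hpZ
  set M : B → ℝ := fun z => ⨆ t, condProb p T Z t z with hM
  have hpq0 : ∀ s, 0 ≤ pq s := fun s => pr_nonneg hp J s
  have hpZ0 : ∀ z, 0 ≤ pZ z := fun z => pr_nonneg hp Z z
  have hle : ∀ s : A × B, pq s ≤ pZ s.2 := fun s => pr_le_pr_comp hp J (fun s => s.2) s
  have hmarg : ∀ z, ∑ t, pq (t, z) = pZ z := fun z => pr_marg T Z z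
  have hcp_nonneg : ∀ t z, 0 ≤ condProb p T Z t z :=
    fun t z => div_nonneg (pr_nonneg hp _ _) (pr_nonneg hp _ _)
  have hbdd : ∀ z, BddAbove (Set.range fun t => condProb p T Z t z) :=
    fun z => Set.Finite.bddAbove (Set.finite_range _)
  have hM0 : ∀ z, 0 ≤ M z := by
    intro z
    obtain ⟨t0⟩ := (inferInstance : Nonempty A)
    exact le_trans (hcp_nonneg t0 z) (le_ciSup (hbdd z) t0)
  have hMpos : ∀ z, 0 < pZ z → 0 < M z := by
    intro z hz
    have : ∃ t, 0 < pq (t, z) := by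
      by_contra h
      push_neg at h
      have : ∑ t, pq (t, z) = 0 :=
        Finset.sum_eq_zero fun t _ => le_antisymm (h t) (hpq0 (t, z))
      rw [hmarg z] at this
      exact absurd this hz.ne'
    obtain ⟨t, ht⟩ := this
    have hcp : 0 < condProb p T Z t z := div_pos ht hz
    exact lt_of_lt_of_le hcp (le_ciSup (hbdd z) t)
  -- Step 1 : -(H(T|Z)) ≤ ∑ z, pZ z * log (M z)
  have hentZ : entropy p Z = -∑ s : A × B, pq s * Real.log (pZ s.2) := by
    have h := ent_comp (p := p) J (fun s => s.2)
    have h2 : entropy p Z = entropy p (fun ω => (J ω).2) := rfl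
    rw [h2, h]
  have hstep1 : -(condEntropy p T Z) ≤ ∑ z, pZ z * Real.log (M z) := by
    have hterm : ∀ s : A × B,
        pq s * Real.log (pq s) - pq s * Real.log (pZ s.2) ≤ pq s * Real.log (M s.2) := by
      intro s
      by_cases hs : 0 < pq s
      · have hz : 0 < pZ s.2 := lt_of_lt_of_le hs (hle s)
        have hcp : 0 < condProb p T Z s.1 s.2 := div_pos (by exact hs) hz
        have hcpM : condProb p T Z s.1 s.2 ≤ M s.2 := le_ciSup (hbdd s.2) s.1
        have : Real.log (pq s) - Real.log (pZ s.2) ≤ Real.log (M s.2) := by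
          have hlog : Real.log (pq s) - Real.log (pZ s.2)
              = Real.log (condProb p T Z s.1 s.2) := by
            rw [condProb, ← Real.log_div (by exact hs.ne') hz.ne']
          rw [hlog]
          exact Real.log_le_log hcp hcpM
        calc pq s * Real.log (pq s) - pq s * Real.log (pZ s.2)
            = pq s * (Real.log (pq s) - Real.log (pZ s.2)) := by ring
          _ ≤ pq s * Real.log (M s.2) := mul_le_mul_of_nonneg_left this (hpq0 s)
      · have h0 : pq s = 0 := le_antisymm (not_lt.mp hs) (hpq0 s)
        simp [h0]
    have hsum : ∑ s : A × B, pq s * Real.log (M s.2) = ∑ z, pZ z * Real.log (M z) := by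
      rw [Fintype.sum_prod_type_right]
      refine Finset.sum_congr rfl fun z _ => ?_
      show ∑ t : A, pq (t, z) * Real.log (M z) = pZ z * Real.log (M z)
      rw [← Finset.sum_mul, hmarg z]
    have hCE : -(condEntropy p T Z)
        = ∑ s : A × B, (pq s * Real.log (pq s) - pq s * Real.log (pZ s.2)) := by
      rw [condEntropy, hentZ]
      have : entropy p (fun ω => (T ω, Z ω)) = -∑ s : A × B, pq s * Real.log (pq s) := rfl
      rw [this, Finset.sum_sub_distrib]
      ring
    rw [hCE, ← hsum]
    exact Finset.sum_le_sum fun s _ => hterm s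
  -- Step 2 : Jensen
  have hstep2 : ∑ z, pZ z * Real.log (M z) ≤ Real.log (∑ z, pZ z * M z) := by
    set ZS : Finset B := Finset.univ.filter (fun z => 0 < pZ z) with hZS
    have hres1 : ∑ z, pZ z * Real.log (M z) = ∑ z ∈ ZS, pZ z * Real.log (M z) := by
      rw [hZS, Finset.sum_filter_of_ne fun z _ h =>
        lt_of_le_of_ne (hpZ0 z) (Ne.symm (left_ne_zero_of_mul h))]
    have hres2 : ∑ z, pZ z * M z = ∑ z ∈ ZS, pZ z * M z := by
      rw [hZS, Finset.sum_filter_of_ne fun z _ h =>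
        lt_of_le_of_ne (hpZ0 z) (Ne.symm (left_ne_zero_of_mul h))]
    have hZSsum : ∑ z ∈ ZS, pZ z = 1 := by
      rw [hZS, Finset.sum_filter_of_ne fun z _ h => lt_of_le_of_ne (hpZ0 z) (Ne.symm h)]
      exact sum_pr hp1 Z
    rw [hres1, hres2]
    exact jensen_log ZS pZ M (fun z _ => hpZ0 z) hZSsum
      (fun z hz => hMpos z (Finset.mem_filter.mp hz).2)
  have hEpos : 0 < ∑ z, pZ z * M z := by
    have : ∃ z, 0 < pZ z := by
      by_contra h
      push_neg at h
      have : ∑ z, pZ z = 0 :=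
        Finset.sum_eq_zero fun z _ => le_antisymm (h z) (hpZ0 z)
      rw [sum_pr hp1 Z] at this
      exact one_ne_zero this
    obtain ⟨z0, hz0⟩ := this
    refine Finset.sum_pos' (fun z _ => mul_nonneg (hpZ0 z) (hM0 z)) ?_
    exact ⟨z0, Finset.mem_univ z0, mul_pos hz0 (hMpos z0 hz0)⟩
  calc Real.exp (-(condEntropy p T Z))
      ≤ Real.exp (Real.log (∑ z, pZ z * M z)) :=
        Real.exp_le_exp.mpr (hstep1.trans hstep2)
    _ = ∑ z, pZ z * M z := Real.exp_log hEpos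
end aux3

/-- **Bayes error rate of a minimal sufficient representation.** If
`z1 = f ∘ v1` is minimal sufficient for `v2` (`I(z1; v2) = I(v1; v2)` and
`I(z1; v1 | v2) = 0`), then its Bayes error rate for predicting `T` satisfies
`Pe ≤ 1 − exp(−(H(T) − (I(v1; v2) − I(v1; v2 | T))))`. -/
theorem bayes_error_of_minimal_sufficient
    {Ω V1 V2 Z1 A : Type*} [Fintype Ω]
    [Fintype V1] [DecidableEq V1] [Nonempty V1]
    [Fintype V2] [DecidableEq V2] [Nonempty V2]
    [Fintype Z1] [DecidableEq Z1] [Nonempty Z1]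
    [Fintype A] [DecidableEq A] [Nonempty A]
    (p : Ω → ℝ) (hp : ∀ ω, 0 ≤ p ω) (hp1 : ∑ ω, p ω = 1)
    (v1 : Ω → V1) (v2 : Ω → V2) (T : Ω → A) (f : V1 → Z1)
    (hsuf : mi p (fun ω => f (v1 ω)) v2 = mi p v1 v2)
    (hmin : cmi p (fun ω => f (v1 ω)) v1 v2 = 0) :
    bayesError p T (fun ω => f (v1 ω)) ≤
      1 - Real.exp (-(entropy p T - (mi p v1 v2 - cmi p v1 v2 T))) := by
  classical
  -- relabeling identities
  have hA1 : entropy p (fun ω => (f (v1 ω), (v1 ω, v2 ω)))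
      = entropy p (fun ω => (v1 ω, v2 ω)) := by
    refine ent_relabel _ _ (e := fun s : V1 × V2 => (f s.1, s)) ?_ (fun ω => rfl)
    intro a b h
    injection h with h1 h2
  have hA2 : entropy p (fun ω => (T ω, v2 ω)) = entropy p (fun ω => (v2 ω, T ω)) := by
    refine ent_relabel _ _ (e := Prod.swap) Prod.swap_injective (fun ω => rfl)
  have hA3 : entropy p (fun ω => (f (v1 ω), (T ω, v2 ω)))
      = entropy p (fun ω => (f (v1 ω), (v2 ω, T ω))) := by
    refine ent_relabel _ _ (e := fun s : Z1 × (V2 × A) => (s.1, (s.2.2, s.2.1))) ?_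
      (fun ω => rfl)
    intro a b h
    injection h with h1 h2
    injection h2 with h3 h4
    exact Prod.ext h1 (Prod.ext h4 h3)
  have hA4 : entropy p (fun ω => (v2 ω, (f (v1 ω), T ω)))
      = entropy p (fun ω => (f (v1 ω), (v2 ω, T ω))) := by
    refine ent_relabel _ _ (e := fun s : Z1 × (V2 × A) => (s.2.1, (s.1, s.2.2))) ?_
      (fun ω => rfl)
    intro a b h
    injection h with h1 h2
    injection h2 with h3 h4
    exact Prod.ext h3 (Prod.ext h1 h4)
  have hA5 : entropy p (fun ω => (v1 ω, (f (v1 ω), T ω)))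
      = entropy p (fun ω => (v1 ω, T ω)) := by
    refine ent_relabel _ _ (e := fun s : V1 × A => (s.1, (f s.1, s.2))) ?_ (fun ω => rfl)
    intro a b h
    injection h with h1 h2
    injection h2 with h3 h4
    exact Prod.ext h1 h4
  have hA6 : entropy p (fun ω => (v1 ω, (v2 ω, (f (v1 ω), T ω))))
      = entropy p (fun ω => (v1 ω, (v2 ω, T ω))) := by
    refine ent_relabel _ _
      (e := fun s : V1 × (V2 × A) => (s.1, (s.2.1, (f s.1, s.2.2)))) ?_ (fun ω => rfl)
    intro a b h
    injection h with h1 h2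
    injection h2 with h3 h4
    injection h4 with h5 h6
    exact Prod.ext h1 (Prod.ext h3 h6)
  have hA7 : entropy p (fun ω => (T ω, f (v1 ω)))
      = entropy p (fun ω => (f (v1 ω), T ω)) := by
    refine ent_relabel _ _ (e := Prod.swap) Prod.swap_injective (fun ω => rfl)
  have h0 := cmi_nonneg hp hp1 (fun ω => f (v1 ω)) T v2
  have hdp := cmi_nonneg hp hp1 v1 v2 (fun ω => (f (v1 ω), T ω))
  have hkey : condEntropy p T (fun ω => f (v1 ω))
      ≤ entropy p T - (mi p v1 v2 - cmi p v1 v2 T) := by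
    simp only [cmi, mi, condEntropy] at h0 hdp hsuf hmin ⊢
    rw [hA1] at hmin
    rw [hA2, hA3] at h0
    rw [hA4, hA5, hA6] at hdp
    rw [hA7]
    linarith
  have hE := exp_neg_condEntropy_le hp hp1 T (fun ω => f (v1 ω))
  have hexp : Real.exp (-(entropy p T - (mi p v1 v2 - cmi p v1 v2 T)))
      ≤ Real.exp (-(condEntropy p T (fun ω => f (v1 ω)))) :=
    Real.exp_le_exp.mpr (neg_le_neg hkey)
  unfold bayesError
  linarith [hexp.trans hE]
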